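/- Consequence of the homotopy/Moser argument: for J = ⟨y²+z^a, yz²⟩ with a ≥ 4 and any A ≠ 0, B ∈ C, the algebraic restriction [A dy∧dz + B z dy∧dz]_J is diffeomorphic to [A dy∧dz]_J, and by the further linear change (y,z) ↦ (Cy, Dz) with C² = D^a and CD = A it is diffeomorphic to [dy∧dz]_J. -/

import Mathlib

open Filter Topology

set_option maxHeartbeats 1000000
set_option synthInstance.maxHeartbeats 400000

noncomputable section

/-- The space `ℂ^m`. -/
abbrev Cm (m : ℕ) := Fin m → ℂ

/-- Model of the ring of `ℂ`-analytic function-germs at `0` on `ℂ^m`: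
functions that are analytic at `0`. -/
def AnalyticGermRing (m : ℕ) : Subalgebra ℂ (Cm m → ℂ) where
  carrier := {f | AnalyticAt ℂ f 0}
  mul_mem' := fun hf hg => hf.mul hg
  add_mem' := fun hf hg => hf.add hg
  algebraMap_mem' := fun _ => analyticAt_const

/-- `O m` : the ring of analytic function-germs at `0 ∈ ℂ^m` (model). -/
abbrev O (m : ℕ) := AnalyticGermRing m

theorem coord_analyticAt (m : ℕ) (i : Fin m) (x : Cm m) :
    AnalyticAt ℂ (fun y : Cm m => y i) x :=
  (ContinuousLinearMap.proj (R := ℂ) (φ := fun _ : Fin m => ℂ) i).analyticAt x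

/-- The `i`-th coordinate function as an analytic germ. -/
def coordO (m : ℕ) (i : Fin m) : O m := ⟨fun y => y i, coord_analyticAt m i 0⟩

/-- Partial derivative `∂/∂x_i` on analytic germs. -/
def pd {m : ℕ} (i : Fin m) (f : O m) : O m :=
  ⟨fun x => fderiv ℂ (f : Cm m → ℂ) x (Pi.single i 1), by
    have h1 : AnalyticAt ℂ (fderiv ℂ (f : Cm m → ℂ)) 0 := f.2.fderiv
    have h2 := (ContinuousLinearMap.apply ℂ ℂ (Pi.single i 1 : Cm m)).analyticAt
      (fderiv ℂ (f : Cm m → ℂ) 0)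
    exact h2.comp h1⟩

/-- Germs of analytic differential `p`-forms on `ℂ^m`, given by their
coefficient family: `ω J` is the coefficient of `dx_{J 0} ⊗ ⋯ ⊗ dx_{J (p-1)}`. -/
abbrev Form (m p : ℕ) := (Fin p → Fin m) → O m

/-- A form is alternating: coefficients vanish on non-injective indices and are
antisymmetric under permutations. -/
def IsAlt {m p : ℕ} (ω : Form m p) : Prop :=
  (∀ J : Fin p → Fin m, ¬ Function.Injective J → ω J = 0) ∧
  ∀ (J : Fin p → Fin m) (σ : Equiv.Perm (Fin p)),
    ω (J ∘ σ) = ((Equiv.Perm.sign σ : ℤ) : ℂ) • ω J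

/-- Exterior derivative on coefficient families. -/
def extD {m p : ℕ} (ω : Form m p) : Form m (p + 1) :=
  fun J => ∑ i : Fin (p + 1), ((-1 : ℂ) ^ (i : ℕ)) • pd (J i) (ω (J ∘ i.succAbove))

/-- Exterior derivative from degree `p-1` to degree `p` (zero in degree `0`). -/
def dLow {m : ℕ} : {p : ℕ} → Form m (p - 1) → Form m p
  | 0, _ => 0
  | _ + 1, β => extD β

/-- `ω ∈ I·Λ^p`: all coefficients lie in the ideal `I`. -/
def memIF {m p : ℕ} (I : Ideal (O m)) (ω : Form m p) : Prop := ∀ J, ω J ∈ I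

/-- Equality of forms as germs at `0`. -/
def FormEq {m p : ℕ} (ω₁ ω₂ : Form m p) : Prop :=
  ∀ J, ((ω₁ J : Cm m → ℂ)) =ᶠ[𝓝 (0 : Cm m)] (ω₂ J : Cm m → ℂ)

/-- `ω` has zero algebraic restriction to `I`:
`ω = α + dβ` with `α ∈ I·Λ^p`, `β ∈ I·Λ^{p-1}`. -/
def ZeroAR {m p : ℕ} (I : Ideal (O m)) (ω : Form m p) : Prop :=
  ∃ (α : Form m p) (β : Form m (p - 1)),
    memIF I α ∧ memIF I β ∧ FormEq ω (α + dLow β)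

/-- Interior product with a vector field. -/
def iprod {m : ℕ} (X : Fin m → O m) : {p : ℕ} → Form m p → Form m (p - 1)
  | 0, _ => 0
  | _ + 1, ω => fun J => ∑ k : Fin m, X k * ω (Fin.cons k J)

/-- Lie derivative of a form along a vector field (Cartan's formula). -/
def lieD {m p : ℕ} (X : Fin m → O m) (ω : Form m p) : Form m p :=
  dLow (iprod X ω) + (show Form m p from iprod X (extD ω))

/-- Wedge product of forms (on coefficient families, with the usual normalization). -/
def wedge {m p q : ℕ} (ω : Form m p) (γ : Form m q) : Form m (p + q) :=
  ((p.factorial * q.factorial : ℂ))⁻¹ •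
    (fun K => ∑ σ : Equiv.Perm (Fin (p + q)),
      ((Equiv.Perm.sign σ : ℤ) : ℂ) •
        (ω (fun i => K (σ (Fin.castAdd q i))) * γ (fun j => K (σ (Fin.natAdd p j)))))

/-- Coefficient family of the pullback `Φ^*ω` (as plain functions). -/
def pullFunF {k m p : ℕ} (Φ : Cm k → Cm m) (ω : Form m p) :
    (Fin p → Fin k) → Cm k → ℂ :=
  fun J x => ∑ K : Fin p → Fin m,
    (ω K : Cm m → ℂ) (Φ x) *
      ∏ i : Fin p, fderiv ℂ (fun y => Φ y (K i)) x (Pi.single (J i) 1)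

/-- The analytic form `ω'` represents the coefficient family `c` (as germs at `0`). -/
def Represents {k p : ℕ} (ω' : Form k p) (c : (Fin p → Fin k) → Cm k → ℂ) : Prop :=
  ∀ J, (ω' J : Cm k → ℂ) =ᶠ[𝓝 (0 : Cm k)] c J

/-- `Φ^*I = I` : `f ∈ I` iff `f ∘ Φ` is (the germ of) an element of `I`. -/
def PreservesIdeal {m : ℕ} (Φ : Cm m → Cm m) (I : Ideal (O m)) : Prop :=
  ∀ f : O m, f ∈ I ↔
    ∃ g ∈ I, (g : Cm m → ℂ) =ᶠ[𝓝 (0 : Cm m)] fun x => (f : Cm m → ℂ) (Φ x)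

/-- A diffeomorphism-germ of `(ℂ^m, 0)` (model). -/
structure LocalDiffeo (m : ℕ) where
  toFun : Cm m → Cm m
  invFun : Cm m → Cm m
  an : AnalyticAt ℂ toFun 0
  map_zero : toFun 0 = 0
  left_inv : ∀ᶠ x in 𝓝 (0 : Cm m), invFun (toFun x) = x
  right_inv : ∀ᶠ x in 𝓝 (0 : Cm m), toFun (invFun x) = x

/-- The algebraic restrictions `[ω₁]_I` and `[ω₂]_I` are diffeomorphic (via a
diffeomorphism-germ preserving `I`). -/
def ARDiffeomorphic {m p : ℕ} (I : Ideal (O m)) (ω₁ ω₂ : Form m p) : Prop :=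
  ∃ Φ : LocalDiffeo m, PreservesIdeal Φ.toFun I ∧
    ∀ ω' : Form m p, Represents ω' (pullFunF Φ.toFun ω₂) → ZeroAR I (ω' - ω₁)

/-- The Euler vector field `Σ λ_i x_i ∂/∂x_i`. -/
def eulerVF (m : ℕ) (lam : Fin m → ℕ) : Fin m → O m :=
  fun i => ((lam i : ℂ)) • coordO m i

/-- The coordinate `y` on `ℂ²`. -/
def Y : O 2 := coordO 2 0
/-- The coordinate `z` on `ℂ²`. -/
def Z : O 2 := coordO 2 1

/-- The 1-form `g dy + h dz` on `ℂ²`. -/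
def oneF (g h : O 2) : Form 2 1 := fun J => if J 0 = 0 then g else h

/-- The 2-form `f dy ∧ dz` on `ℂ²`. -/
def twoF (f : O 2) : Form 2 2 :=
  fun J => if J 0 = 0 ∧ J 1 = 1 then f else if J 0 = 1 ∧ J 1 = 0 then -f else 0



/-!
All diffeomorphisms used are weighted scalings `Φ(y, z) = (u(z) y, v(z) z)` with `u² = vᵃ`,
which multiply the generators `y² + zᵃ` and `y z²` by units and so preserve the ideal, and which
pull `f dy ∧ dz` back to `f(Φ) u (v + z v') dy ∧ dz`. Since `V(z) z² dy ∧ dz = d(V(z) y z² dz)`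
and `y z²` is a generator, only the constant and linear terms in `z` of the coefficient matter.
For `f = A + B z`, the choice `u = tᵃ`, `v = t²`, `t = t₀ + t₁ z` cancels the linear term for a
suitable `t₁` and leaves the constant `A t₀^{a+2}`, which is `A` for `t₀ = 1` and `1` when
`t₀^{a+2} = A⁻¹`; the linear change `(C y, D z)` is the case of constant `u`, `v`.
-/

lemma Fin.eq_zero_or_eq_one (i : Fin 2) : i = 0 ∨ i = 1 := by fin_cases i <;> simp

lemma AnalyticAt.exists_localInverse {𝕜 : Type*} [NontriviallyNormedField 𝕜] [CompleteSpace 𝕜]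
    [CharZero 𝕜] {f : 𝕜 → 𝕜} {x y : 𝕜} (hf : AnalyticAt 𝕜 f x) (hf' : deriv f x ≠ 0)
    (hfx : f x = y) :
    ∃ g : 𝕜 → 𝕜, AnalyticAt 𝕜 g y ∧ g y = x ∧ (∀ᶠ z in 𝓝 x, g (f z) = z) ∧
      ∀ᶠ w in 𝓝 y, f (g w) = w := by
  subst hfx
  have hleft := hf.hasStrictDerivAt.eventually_left_inverse hf'
  exact ⟨_, hf.analyticAt_localInverse hf', hleft.self_of_nhds, hleft,
    hf.hasStrictDerivAt.eventually_right_inverse hf'⟩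

/-- Since elements of `O m` are functions rather than germs, a function vanishing near `0` has
to be written as `p g₁ + q g₂` globally; `p = f ḡ₁ / (|g₁|² + |g₂|²)` and
`q = f ḡ₂ / (|g₁|² + |g₂|²)` do it and are analytic at `0`, being `0` near `0`. -/
lemma mem_span_pair_of_eventuallyEq_zero {m : ℕ} {g₁ g₂ f : O m}
    (hg : ∀ x, (g₁ : Cm m → ℂ) x = 0 → (g₂ : Cm m → ℂ) x = 0 → x = 0)
    (hf : (f : Cm m → ℂ) =ᶠ[𝓝 0] 0) : f ∈ Ideal.span {g₁, g₂} := by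
  set d : Cm m → ℂ := fun x =>
    ((Complex.normSq ((g₁ : Cm m → ℂ) x) + Complex.normSq ((g₂ : Cm m → ℂ) x) : ℝ) : ℂ)
  have hcoef : ∀ g : O m,
      AnalyticAt ℂ (fun x => (f : Cm m → ℂ) x * star ((g : Cm m → ℂ) x) / d x) 0 :=
    fun g => (analyticAt_const (v := (0 : ℂ))).congr (by filter_upwards [hf] with x hx; simp [hx])
  refine Ideal.mem_span_pair.2 ⟨⟨_, hcoef g₁⟩, ⟨_, hcoef g₂⟩, Subtype.ext (funext fun x => ?_)⟩
  by_cases hx : x = 0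
  · subst hx
    simp [hf.self_of_nhds]
  have hd : d x ≠ 0 := by
    intro h0
    have h0 : Complex.normSq ((g₁ : Cm m → ℂ) x) + Complex.normSq ((g₂ : Cm m → ℂ) x) = 0 :=
      Complex.ofReal_eq_zero.1 h0
    have h₁ := Complex.normSq_nonneg ((g₁ : Cm m → ℂ) x)
    have h₂ := Complex.normSq_nonneg ((g₂ : Cm m → ℂ) x)
    exact hx (hg x (Complex.normSq_eq_zero.1 (by linarith))
      (Complex.normSq_eq_zero.1 (by linarith)))
  have hdx : d x = (g₁ : Cm m → ℂ) x * star ((g₁ : Cm m → ℂ) x)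
      + (g₂ : Cm m → ℂ) x * star ((g₂ : Cm m → ℂ) x) := by
    simp only [d, Complex.star_def, Complex.mul_conj]; push_cast; ring
  simp only [Subalgebra.coe_add, Subalgebra.coe_mul, Pi.add_apply, Pi.mul_apply]
  field_simp
  rw [hdx]; ring

lemma mem_span_pair_of_eventuallyEq {m : ℕ} {g₁ g₂ f g : O m}
    (hg : ∀ x, (g₁ : Cm m → ℂ) x = 0 → (g₂ : Cm m → ℂ) x = 0 → x = 0)
    (hmem : g ∈ Ideal.span {g₁, g₂}) (hfg : (f : Cm m → ℂ) =ᶠ[𝓝 0] g) :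
    f ∈ Ideal.span {g₁, g₂} := by
  have hsub : f - g ∈ Ideal.span {g₁, g₂} :=
    mem_span_pair_of_eventuallyEq_zero hg (by filter_upwards [hfg] with x hx; simp [hx])
  simpa using Ideal.add_mem _ hsub hmem

@[simp] lemma coe_Y_apply (x : Cm 2) : (Y : Cm 2 → ℂ) x = x 0 := rfl
@[simp] lemma coe_Z_apply (x : Cm 2) : (Z : Cm 2 → ℂ) x = x 1 := rfl

def idealJ (a : ℕ) : Ideal (O 2) := Ideal.span {Y ^ 2 + Z ^ a, Y * Z ^ 2}

lemma eq_zero_of_idealJ_generators {a : ℕ} (ha : a ≠ 0) {x : Cm 2}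
    (h₁ : x 0 ^ 2 + x 1 ^ a = 0) (h₂ : x 0 * x 1 ^ 2 = 0) : x = 0 := by
  have hx₁ : x 1 = 0 := by
    rcases mul_eq_zero.1 h₂ with h | h
    · simpa [h, ha] using h₁
    · exact pow_eq_zero_iff two_ne_zero |>.1 h
  have hx₀ : x 0 = 0 := by simpa [hx₁, ha] using h₁
  funext i
  rcases Fin.eq_zero_or_eq_one i with rfl | rfl <;> assumption

lemma mem_idealJ_of_eventuallyEq {a : ℕ} (ha : a ≠ 0) {f g : O 2} (hg : g ∈ idealJ a)
    (hfg : (f : Cm 2 → ℂ) =ᶠ[𝓝 0] g) : f ∈ idealJ a :=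
  mem_span_pair_of_eventuallyEq (fun x h₁ h₂ => eq_zero_of_idealJ_generators ha
    (by simpa using h₁) (by simpa using h₂)) hg hfg

def compO {m : ℕ} (f : O m) (Φ : Cm m → Cm m) (hΦ : AnalyticAt ℂ Φ 0) (hΦ₀ : Φ 0 = 0) : O m :=
  ⟨fun x => (f : Cm m → ℂ) (Φ x), by
    have hf : AnalyticAt ℂ (f : Cm m → ℂ) (Φ 0) := by rw [hΦ₀]; exact f.2
    exact hf.comp hΦ⟩

@[simp] lemma coe_compO_apply {m : ℕ} (f : O m) (Φ : Cm m → Cm m) (hΦ : AnalyticAt ℂ Φ 0)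
    (hΦ₀ : Φ 0 = 0) (x : Cm m) : (compO f Φ hΦ hΦ₀ : Cm m → ℂ) x = (f : Cm m → ℂ) (Φ x) := rfl

def scaleMap (u v : ℂ → ℂ) : Cm 2 → Cm 2 := fun x => ![u (x 1) * x 0, v (x 1) * x 1]

section scaleMap

variable (u v : ℂ → ℂ)

@[simp] lemma scaleMap_apply_zero (x : Cm 2) : scaleMap u v x 0 = u (x 1) * x 0 := rfl
@[simp] lemma scaleMap_apply_one (x : Cm 2) : scaleMap u v x 1 = v (x 1) * x 1 := rfl

lemma scaleMap_map_zero : scaleMap u v 0 = 0 := by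
  funext i
  rcases Fin.eq_zero_or_eq_one i with rfl | rfl <;> simp

variable {u v}

lemma analyticAt_scaleMap (hu : AnalyticAt ℂ u 0) (hv : AnalyticAt ℂ v 0) :
    AnalyticAt ℂ (scaleMap u v) 0 := by
  have hz : AnalyticAt ℂ (fun x : Cm 2 => x 1) 0 := coord_analyticAt 2 1 0
  refine AnalyticAt.pi (f := fun i x => scaleMap u v x i) (Fin.forall_fin_two.2 ⟨?_, ?_⟩)
  · exact (hu.comp_of_eq hz rfl).mul (coord_analyticAt 2 0 0)
  · exact (hv.comp_of_eq hz rfl).mul hz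

/-- When `u² = vᵃ`, the scaling multiplies `y² + zᵃ` by `u²` and `y z²` by `u v²`. -/
lemma compO_scaleMap_mem_idealJ {a : ℕ} (hu : AnalyticAt ℂ u 0) (hv : AnalyticAt ℂ v 0)
    (huv : ∀ z, u z ^ 2 = v z ^ a) {f : O 2} (hf : f ∈ idealJ a) :
    compO f (scaleMap u v) (analyticAt_scaleMap hu hv) (scaleMap_map_zero u v) ∈ idealJ a := by
  obtain ⟨p, q, rfl⟩ := Ideal.mem_span_pair.1 hf
  have hz : AnalyticAt ℂ (fun x : Cm 2 => x 1) 0 := coord_analyticAt 2 1 0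
  let comp (g : O 2) := compO g (scaleMap u v) (analyticAt_scaleMap hu hv) (scaleMap_map_zero u v)
  let U : O 2 := ⟨fun x => u (x 1), hu.comp_of_eq hz rfl⟩
  let V : O 2 := ⟨fun x => v (x 1), hv.comp_of_eq hz rfl⟩
  refine Ideal.mem_span_pair.2 ⟨comp p * U ^ 2, comp q * (U * V ^ 2), Subtype.ext ?_⟩
  funext x
  simp only [comp, U, V, coe_compO_apply, Subalgebra.coe_add, Subalgebra.coe_mul,
    Subalgebra.coe_pow, Pi.add_apply, Pi.mul_apply, Pi.pow_apply, coe_Y_apply, coe_Z_apply,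
    scaleMap_apply_zero, scaleMap_apply_one]
  linear_combination (p : Cm 2 → ℂ) (scaleMap u v x) * x 1 ^ a * huv (x 1)

lemma preservesIdeal_scaleMap {a : ℕ} (ha : a ≠ 0) {u' v' : ℂ → ℂ}
    (hu : AnalyticAt ℂ u 0) (hv : AnalyticAt ℂ v 0)
    (hu' : AnalyticAt ℂ u' 0) (hv' : AnalyticAt ℂ v' 0)
    (huv : ∀ z, u z ^ 2 = v z ^ a) (huv' : ∀ z, u' z ^ 2 = v' z ^ a)
    (hinv : ∀ᶠ x in 𝓝 0, scaleMap u v (scaleMap u' v' x) = x) :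
    PreservesIdeal (scaleMap u v) (idealJ a) := by
  intro f
  refine ⟨fun hf => ⟨_, compO_scaleMap_mem_idealJ hu hv huv hf, .rfl⟩, ?_⟩
  rintro ⟨g, hg, hgf⟩
  refine mem_idealJ_of_eventuallyEq ha (compO_scaleMap_mem_idealJ hu' hv' huv' hg) ?_
  have htend : Tendsto (scaleMap u' v') (𝓝 0) (𝓝 0) := by
    simpa [ContinuousAt, scaleMap_map_zero] using (analyticAt_scaleMap hu' hv').continuousAt
  filter_upwards [htend.eventually hgf, hinv] with x hx hxinv
  simp only [compO, hx, hxinv]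

end scaleMap

lemma Filter.Eventually.comp_apply_nhds_zero {m : ℕ} {p : ℂ → Prop} (h : ∀ᶠ z in 𝓝 0, p z)
    (i : Fin m) : ∀ᶠ x in 𝓝 (0 : Cm m), p (x i) :=
  ((continuous_apply i).tendsto (0 : Cm m)).eventually h

/-- `(y, z) ↦ (τ(z)ᵃ y, τ(z)² z)` is invertible because `z ↦ τ(z)² z` is, with local inverse
`ζ`; the inverse is again of this form, `(y, w) ↦ (ρ(w)ᵃ y, ρ(w)² w)` with `ρ = 1 / (τ ∘ ζ)`. -/
lemma exists_localDiffeo_scaleMap {a : ℕ} (ha : a ≠ 0) {τ : ℂ → ℂ} (hτ : AnalyticAt ℂ τ 0)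
    (hτ₀ : τ 0 ≠ 0) :
    ∃ Φ : LocalDiffeo 2, Φ.toFun = scaleMap (fun z => τ z ^ a) (fun z => τ z ^ 2) ∧
      PreservesIdeal Φ.toFun (idealJ a) := by
  have hF : AnalyticAt ℂ (fun z => τ z ^ 2 * z) 0 := (hτ.pow 2).mul analyticAt_id
  have hF' : deriv (fun z => τ z ^ 2 * z) 0 = τ 0 ^ 2 := by
    simpa using ((hτ.differentiableAt.hasDerivAt.fun_pow 2).fun_mul (hasDerivAt_id' 0)).deriv
  obtain ⟨ζ, hζ, hζ₀, hleft, hright⟩ :=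
    hF.exists_localInverse (y := 0) (hF' ▸ pow_ne_zero 2 hτ₀) (by simp)
  have hτζ : AnalyticAt ℂ (fun w => τ (ζ w)) 0 := (hζ₀ ▸ hτ).comp hζ
  have hρ : AnalyticAt ℂ (fun w => (τ (ζ w))⁻¹) 0 := hτζ.inv (by simpa [hζ₀] using hτ₀)
  have hτ_ne : ∀ᶠ z in 𝓝 0, τ z ≠ 0 := hτ.continuousAt.eventually_ne hτ₀
  have hτζ_ne : ∀ᶠ w in 𝓝 0, τ (ζ w) ≠ 0 := hτζ.continuousAt.eventually_ne (by simpa [hζ₀])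
  have hinv_left : ∀ᶠ x in 𝓝 0, scaleMap (fun w => (τ (ζ w))⁻¹ ^ a) (fun w => (τ (ζ w))⁻¹ ^ 2)
      (scaleMap (fun z => τ z ^ a) (fun z => τ z ^ 2) x) = x := by
    filter_upwards [(hleft.and hτ_ne).comp_apply_nhds_zero 1] with x ⟨hζx, hτx⟩
    funext i
    rcases Fin.eq_zero_or_eq_one i with rfl | rfl <;>
      simp only [inv_pow, scaleMap_apply_zero, scaleMap_apply_one, hζx] <;> field_simp
  have hinv_right : ∀ᶠ x in 𝓝 0, scaleMap (fun z => τ z ^ a) (fun z => τ z ^ 2)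
      (scaleMap (fun w => (τ (ζ w))⁻¹ ^ a) (fun w => (τ (ζ w))⁻¹ ^ 2) x) = x := by
    filter_upwards [(hright.and hτζ_ne).comp_apply_nhds_zero 1] with x ⟨hFx, hτx⟩
    have hζx : ζ (x 1) = (τ (ζ (x 1)))⁻¹ ^ 2 * x 1 := by
      rw [inv_pow, eq_inv_mul_iff_mul_eq₀ (pow_ne_zero 2 hτx), hFx]
    funext i
    rcases Fin.eq_zero_or_eq_one i with rfl | rfl <;>
      simp only [scaleMap_apply_zero, scaleMap_apply_one, ← hζx]
    · rw [← mul_assoc, ← mul_pow, mul_inv_cancel₀ hτx, one_pow, one_mul]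
    · exact hFx
  have hpow (f : ℂ → ℂ) (z : ℂ) : (f z ^ a) ^ 2 = (f z ^ 2) ^ a := by ring
  exact ⟨⟨_, _, analyticAt_scaleMap (hτ.pow a) (hτ.pow 2), scaleMap_map_zero _ _, hinv_left,
    hinv_right⟩, rfl, preservesIdeal_scaleMap ha (hτ.pow a) (hτ.pow 2) (hρ.pow a) (hρ.pow 2)
    (hpow τ) (hpow _) hinv_right⟩

def twoSign (J : Fin 2 → Fin 2) : ℂ :=
  if J 0 = 0 ∧ J 1 = 1 then 1 else if J 0 = 1 ∧ J 1 = 0 then -1 else 0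

lemma coe_twoF_apply (f : O 2) (J : Fin 2 → Fin 2) (x : Cm 2) :
    (twoF f J : Cm 2 → ℂ) x = twoSign J * (f : Cm 2 → ℂ) x := by
  unfold twoF twoSign
  split_ifs <;> simp

lemma twoSign_eq_zero {K : Fin 2 → Fin 2} (h₁ : K ≠ ![0, 1]) (h₂ : K ≠ ![1, 0]) :
    twoSign K = 0 := by
  unfold twoSign
  split_ifs with H₁ H₂
  · exact absurd (funext fun i => by fin_cases i <;> simp [H₁.1, H₁.2]) h₁
  · exact absurd (funext fun i => by fin_cases i <;> simp [H₂.1, H₂.2]) h₂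
  · rfl

lemma pullFunF_twoF (Φ : Cm 2 → Cm 2) (f : O 2) (J : Fin 2 → Fin 2) (x : Cm 2) :
    pullFunF Φ (twoF f) J x = (f : Cm 2 → ℂ) (Φ x) *
      (fderiv ℂ (fun y => Φ y 0) x (Pi.single (J 0) 1) *
          fderiv ℂ (fun y => Φ y 1) x (Pi.single (J 1) 1) -
        fderiv ℂ (fun y => Φ y 1) x (Pi.single (J 0) 1) *
          fderiv ℂ (fun y => Φ y 0) x (Pi.single (J 1) 1)) := by
  unfold pullFunF
  rw [Fintype.sum_eq_add (![0, 1] : Fin 2 → Fin 2) ![1, 0] (by decide) fun K ⟨h₁, h₂⟩ => by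
    simp [coe_twoF_apply, twoSign_eq_zero h₁ h₂]]
  simp only [coe_twoF_apply, twoSign, Matrix.cons_val_zero, Matrix.cons_val_one,
    Matrix.cons_val_fin_one, and_self, if_true, one_mul, Fin.prod_univ_two, one_ne_zero,
    zero_ne_one, if_false, neg_mul]
  ring

lemma fderiv_comp_apply_one_mul_apply {φ : ℂ → ℂ} {φ' : ℂ} {x : Cm 2}
    (hφ : HasDerivAt φ φ' (x 1)) (i j : Fin 2) :
    fderiv ℂ (fun y : Cm 2 => φ (y 1) * y i) x (Pi.single j 1) =
      φ (x 1) * Pi.single (M := fun _ => ℂ) j 1 i +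
        φ' * Pi.single (M := fun _ => ℂ) j 1 1 * x i := by
  have hproj (k : Fin 2) :=
    (ContinuousLinearMap.proj (R := ℂ) (φ := fun _ : Fin 2 => ℂ) k).hasFDerivAt (x := x)
  rw [show fderiv ℂ (fun y : Cm 2 => φ (y 1) * y i) x = _ from
    ((hφ.comp_hasFDerivAt x (hproj 1)).fun_mul (hproj i)).fderiv]
  simp only [Function.comp_apply, ContinuousLinearMap.proj_apply, add_apply, smul_apply,
    smul_eq_mul]
  ring

section scaleMap

variable {u v u' v' : ℂ → ℂ}

lemma fderiv_scaleMap_zero (hu : ∀ z, HasDerivAt u (u' z) z) (x : Cm 2) (j : Fin 2) :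
    fderiv ℂ (fun y => scaleMap u v y 0) x (Pi.single j 1) =
      if j = 0 then u (x 1) else u' (x 1) * x 0 := by
  rw [show (fun y => scaleMap u v y 0) = fun y => u (y 1) * y 0 from rfl,
    fderiv_comp_apply_one_mul_apply (hu (x 1))]
  rcases Fin.eq_zero_or_eq_one j with rfl | rfl <;> simp

lemma fderiv_scaleMap_one (hv : ∀ z, HasDerivAt v (v' z) z) (x : Cm 2) (j : Fin 2) :
    fderiv ℂ (fun y => scaleMap u v y 1) x (Pi.single j 1) =
      if j = 0 then 0 else v (x 1) + x 1 * v' (x 1) := by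
  rw [show (fun y => scaleMap u v y 1) = fun y => v (y 1) * y 1 from rfl,
    fderiv_comp_apply_one_mul_apply (hv (x 1))]
  rcases Fin.eq_zero_or_eq_one j with rfl | rfl <;> simp [mul_comm]

lemma pullFunF_scaleMap_twoF (hu : ∀ z, HasDerivAt u (u' z) z)
    (hv : ∀ z, HasDerivAt v (v' z) z) (f : O 2) :
    pullFunF (scaleMap u v) (twoF f) = fun J x =>
      twoSign J * ((f : Cm 2 → ℂ) (scaleMap u v x) * (u (x 1) * (v (x 1) + x 1 * v' (x 1)))) := by
  funext J x
  rw [pullFunF_twoF, fderiv_scaleMap_zero hu, fderiv_scaleMap_zero hu, fderiv_scaleMap_one hv,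
    fderiv_scaleMap_one hv, twoSign]
  rcases Fin.eq_zero_or_eq_one (J 0) with h₀ | h₀ <;>
    rcases Fin.eq_zero_or_eq_one (J 1) with h₁ | h₁ <;>
    simp only [h₀, h₁, Fin.reduceEq, if_true, if_false, and_true, and_false] <;> ring

end scaleMap

lemma pd_zero_right {m : ℕ} (i : Fin m) : pd i (0 : O m) = 0 := by
  ext x
  simp [pd]

lemma extD_oneF_zero (h : O 2) : extD (oneF 0 h) = twoF (pd 0 h) := by
  funext J
  rcases Fin.eq_zero_or_eq_one (J 0) with h₀ | h₀ <;>
    rcases Fin.eq_zero_or_eq_one (J 1) with h₁ | h₁ <;>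
    simp [extD, oneF, twoF, Fin.sum_univ_two, h₀, h₁, pd_zero_right]

lemma zeroAR_of_formEq_twoF_pd {I : Ideal (O 2)} {h : O 2} (hh : h ∈ I) {ω : Form 2 2}
    (hω : FormEq ω (twoF (pd 0 h))) : ZeroAR I ω := by
  refine ⟨0, oneF 0 h, fun _ => I.zero_mem, fun J => ?_, ?_⟩
  · unfold oneF; split_ifs; exacts [I.zero_mem, hh]
  · simpa [dLow, extD_oneF_zero] using hω

lemma pd_zero_mul_Y {c : O 2} {φ : ℂ → ℂ} (hφ : Differentiable ℂ φ)
    (hc : ∀ x, (c : Cm 2 → ℂ) x = φ (x 1)) : pd 0 (c * Y) = c := by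
  ext x
  have hcY : ((c * Y : O 2) : Cm 2 → ℂ) = fun y => φ (y 1) * y 0 := funext fun y => by simp [hc]
  show fderiv ℂ ((c * Y : O 2) : Cm 2 → ℂ) x (Pi.single 0 1) = _
  rw [hcY, fderiv_comp_apply_one_mul_apply (hφ (x 1)).hasDerivAt, hc]
  simp

/-- `(E + z² V(z)) dy ∧ dz` differs from `E dy ∧ dz` by `d(V(z) y z² dz)`, whose primitive lies
in `idealJ a` thanks to the generator `y z²`. -/
lemma zeroAR_sub_twoF_of_represents {a : ℕ} {ω : Form 2 2} {F : Cm 2 → ℂ} {E : ℂ} {V : ℂ → ℂ}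
    (hV : Differentiable ℂ V) (hF : ∀ x, F x = E + x 1 ^ 2 * V (x 1))
    (hω : Represents ω fun J x => twoSign J * F x) : ZeroAR (idealJ a) (ω - twoF (E • 1)) := by
  let c : O 2 := ⟨fun x => V (x 1), (hV.analyticAt 0).comp_of_eq (coord_analyticAt 2 1 0) rfl⟩
  have hpd : pd 0 (c * (Y * Z ^ 2)) = c * Z ^ 2 := by
    rw [show c * (Y * Z ^ 2) = c * Z ^ 2 * Y by ring]
    exact pd_zero_mul_Y (φ := fun z => V z * z ^ 2) (by fun_prop) fun x => rfl
  refine zeroAR_of_formEq_twoF_pd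
    (Ideal.mul_mem_left _ c (Ideal.subset_span (by simp) : Y * Z ^ 2 ∈ idealJ a)) fun J => ?_
  rw [hpd]
  filter_upwards [hω J] with x hx
  simp only [Pi.sub_apply, AddSubgroupClass.coe_sub, hx, hF, coe_twoF_apply, SetLike.val_smul,
    OneMemClass.coe_one, Pi.smul_apply, Pi.one_apply, smul_eq_mul, mul_one, MulMemClass.coe_mul,
    SubmonoidClass.coe_pow, Pi.mul_apply, Pi.pow_apply, coe_Z_apply, c]
  ring

open Polynomial in
lemma Polynomial.exists_eq_C_add_X_sq_mul {R : Type*} [CommRing R] (p : R[X])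
    (hp : p.derivative.eval 0 = 0) : ∃ V : R[X], p = C (p.eval 0) + X ^ 2 * V := by
  obtain ⟨V, hV⟩ : X ^ 2 ∣ p - C (p.eval 0) := by
    refine X_pow_dvd_iff.2 fun d hd => ?_
    interval_cases d
    · simp [coeff_zero_eq_eval_zero]
    · have h₁ := coeff_derivative p 0
      rw [coeff_zero_eq_eval_zero, hp] at h₁
      simpa using h₁.symm
  exact ⟨V, by rw [← hV]; ring⟩

open Polynomial in
/-- The first-order condition on `t(z) = t₀ + t₁ z`: the `z`-coefficient of
`(A + B t² z) t^{a+1} (t + 2 t₁ z)` is `t₀^{a+1} ((a + 4) A t₁ + B t₀³)`. -/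
lemma exists_linear_eq_add_sq_mul (a : ℕ) {A : ℂ} (hA : A ≠ 0) (B t₀ : ℂ) :
    ∃ t₁ : ℂ, ∃ V : ℂ[X], ∀ z : ℂ,
      (A + B * ((t₀ + t₁ * z) ^ 2 * z)) * (t₀ + t₁ * z) ^ (a + 1) * (t₀ + t₁ * z + 2 * t₁ * z) =
        A * t₀ ^ (a + 2) + z ^ 2 * V.eval z := by
  set t₁ := -(B * t₀ ^ 3) / ((a + 4) * A)
  have ha4 : (a + 4 : ℂ) ≠ 0 := by exact_mod_cast (Nat.succ_ne_zero (a + 3))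
  set T : ℂ[X] := C t₀ + C t₁ * X
  set P : ℂ[X] := (C A + C B * (T ^ 2 * X)) * T ^ (a + 1) * (T + C (2 * t₁) * X)
  obtain ⟨V, hV⟩ := P.exists_eq_C_add_X_sq_mul (by
    simp only [P, T, t₁, derivative_mul, derivative_C, derivative_pow,
      derivative_X, map_mul, map_add, map_natCast, map_one, Nat.cast_ofNat, Nat.add_one_sub_one,
      Nat.cast_add, Nat.cast_one, add_tsub_cancel_right, pow_one, mul_one, mul_zero, zero_mul,
      zero_add, add_zero, eval_add, eval_mul, eval_C, eval_X, eval_pow, eval_natCast, eval_one]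
    field_simp
    ring)
  refine ⟨t₁, V, fun z => ?_⟩
  have hz := congrArg (eval z) hV
  simp only [P, T, eval_mul, eval_add, eval_pow, eval_C, eval_X, mul_zero, add_zero] at hz
  rw [hz]
  ring

lemma arDiffeomorphic_twoF_add_smul_Z {a : ℕ} (ha : a ≠ 0) {A : ℂ} (hA : A ≠ 0) (B : ℂ) {t₀ : ℂ}
    (ht₀ : t₀ ≠ 0) :
    ARDiffeomorphic (idealJ a) (twoF ((A * t₀ ^ (a + 2)) • 1)) (twoF (A • 1 + B • Z)) := by
  obtain ⟨t₁, V, hV⟩ := exists_linear_eq_add_sq_mul a hA B t₀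
  have ht : ∀ z, HasDerivAt (fun z => t₀ + t₁ * z) t₁ z := fun z => by
    simpa using ((hasDerivAt_id z).const_mul t₁).const_add t₀
  obtain ⟨Φ, hΦ, hpres⟩ := exists_localDiffeo_scaleMap ha (τ := fun z => t₀ + t₁ * z)
    (by fun_prop) (by simpa using ht₀)
  refine ⟨Φ, hpres, fun ω hω => ?_⟩
  rw [hΦ, pullFunF_scaleMap_twoF (fun z => (ht z).fun_pow a) (fun z => (ht z).fun_pow 2)] at hω
  refine zeroAR_sub_twoF_of_represents (V := fun z => V.eval z) V.differentiable (fun x => ?_) hω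
  simp only [Subalgebra.coe_add, Subalgebra.coe_smul, Subalgebra.coe_one, Pi.add_apply,
    Pi.smul_apply, Pi.one_apply, coe_Z_apply, scaleMap_apply_one, smul_eq_mul, mul_one]
  linear_combination hV (x 1)

lemma preservesIdeal_linear {a : ℕ} (ha : a ≠ 0) {C D : ℂ} (hC : C ≠ 0) (hD : D ≠ 0)
    (hCD : C ^ 2 = D ^ a) :
    PreservesIdeal (fun x : Cm 2 => ![C * x 0, D * x 1]) (idealJ a) := by
  refine preservesIdeal_scaleMap (u := fun _ => C) (v := fun _ => D) (u' := fun _ => C⁻¹)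
    (v' := fun _ => D⁻¹) ha analyticAt_const analyticAt_const analyticAt_const analyticAt_const
    (fun _ => hCD) (fun _ => by simp [inv_pow, hCD]) (.of_forall fun x => funext fun i => ?_)
  rcases Fin.eq_zero_or_eq_one i with rfl | rfl <;> simp [hC, hD]

lemma zeroAR_pullback_linear {a : ℕ} {A C D : ℂ} (hCD : C * D = A) {ω : Form 2 2}
    (hω : Represents ω (pullFunF (fun x : Cm 2 => ![C * x 0, D * x 1]) (twoF 1))) :
    ZeroAR (idealJ a) (ω - twoF (A • 1)) := by
  rw [show (fun x : Cm 2 => ![C * x 0, D * x 1]) = scaleMap (fun _ => C) (fun _ => D) from rfl,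
    pullFunF_scaleMap_twoF (u' := 0) (v' := 0) (fun z => hasDerivAt_const z C)
      (fun z => hasDerivAt_const z D)] at hω
  exact zeroAR_sub_twoF_of_represents (V := 0) (differentiable_const 0)
    (fun x => by simp [hCD]) hω

/-- for `J = ⟨y²+z^a, yz²⟩`, `a ≥ 4`, `A ≠ 0`:
`[A dy∧dz + B z dy∧dz]_J` is diffeomorphic to `[A dy∧dz]_J`; by the linear
change `(y,z) ↦ (Cy, Dz)` with `C² = D^a`, `CD = A` the restriction
`[A dy∧dz]_J` is diffeomorphic to `[dy∧dz]_J`; hence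
`[A dy∧dz + B z dy∧dz]_J` is diffeomorphic to `[dy∧dz]_J`. -/
theorem statement_13 (a : ℕ) (ha : 4 ≤ a) (A B : ℂ) (hA : A ≠ 0) :
    ARDiffeomorphic (Ideal.span {Y ^ 2 + Z ^ a, Y * Z ^ 2})
      (twoF (A • 1)) (twoF (A • 1 + B • Z)) ∧
    (∀ C D : ℂ, C ^ 2 = D ^ a → C * D = A →
      PreservesIdeal (fun x : Cm 2 => ![C * x 0, D * x 1])
        (Ideal.span {Y ^ 2 + Z ^ a, Y * Z ^ 2}) ∧
      ∀ ω' : Form 2 2,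
        Represents ω' (pullFunF (fun x : Cm 2 => ![C * x 0, D * x 1]) (twoF 1)) →
        ZeroAR (Ideal.span {Y ^ 2 + Z ^ a, Y * Z ^ 2}) (ω' - twoF (A • 1))) ∧
    ARDiffeomorphic (Ideal.span {Y ^ 2 + Z ^ a, Y * Z ^ 2})
      (twoF 1) (twoF (A • 1 + B • Z)) := by
  have ha' : a ≠ 0 := by omega
  obtain ⟨t₀, ht₀⟩ := IsAlgClosed.exists_pow_nat_eq A⁻¹ (n := a + 2) (by omega)
  refine ⟨by simpa [idealJ] using arDiffeomorphic_twoF_add_smul_Z ha' hA B one_ne_zero,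
    fun C D hCD hCDA => ⟨?_, fun ω hω => zeroAR_pullback_linear hCDA hω⟩, ?_⟩
  · obtain ⟨hC, hD⟩ := mul_ne_zero_iff.1 (hCDA ▸ hA)
    exact preservesIdeal_linear ha' hC hD hCD
  · have ht₀' : t₀ ≠ 0 := (pow_ne_zero_iff (by omega)).1 (ht₀ ▸ inv_ne_zero hA)
    simpa [idealJ, ht₀, hA] using arDiffeomorphic_twoF_add_smul_Z ha' hA B ht₀'
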